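/- arXiv:1805.08323 — 5 statements merged into one kernel-verified Lean document; each statement's English description precedes it below -/
import Mathlib

section
/- Let α ∈ ℝ, σ² > 0, η, κ ≥ 0, and λ ≥ 0. Let P be the product of the Gaussian measure on ℝ with mean α and variance σ² and the Poisson distribution on ℕ with rate λ. Then ∫ (exp(y) + η·n + κ·λ)² dP(y, n) = exp(2α + 2σ²) + (η + κ)²·λ² + η²·λ + 2(η + κ)·exp(α + σ²/2)·λ. -/
/-!
Under the product measure the two coordinates are independent, so after expanding the square the
cross term factors as `E[exp Y] · E[ηZ + κλ]`. The Gaussian moments `E[exp Y]` and `E[exp (2Y)]`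
are values of the moment generating function, and the Poisson moments of `Z` come from the
factorial moments `E[Z (Z - 1) ⋯ (Z - k + 1)] = λ ^ k`.
-/

open MeasureTheory ProbabilityTheory Real
open scoped NNReal Nat

section Product

variable {α β : Type*} [MeasurableSpace α] [MeasurableSpace β]
  {μ : Measure α} {ν : Measure β} [IsProbabilityMeasure μ] [IsProbabilityMeasure ν]

lemma integral_add_sq_prod {f : α → ℝ} {g : β → ℝ} (hf : MemLp f 2 μ) (hg : MemLp g 2 ν) :
    ∫ p, (f p.1 + g p.2) ^ 2 ∂(μ.prod ν)
      = ∫ x, f x ^ 2 ∂μ + 2 * (∫ x, f x ∂μ) * (∫ y, g y ∂ν) + ∫ y, g y ^ 2 ∂ν := by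
  have hf1 := hf.integrable one_le_two
  have hg1 := hg.integrable one_le_two
  have hcross : Integrable (fun p : α × β => 2 * (f p.1 * g p.2)) (μ.prod ν) :=
    (hf1.mul_prod hg1).const_mul 2
  simp_rw [add_sq, mul_assoc]
  rw [integral_add ((hf.integrable_sq.comp_fst ν).fun_add hcross) (hg.integrable_sq.comp_snd μ),
    integral_add (hf.integrable_sq.comp_fst ν) hcross, integral_const_mul,
    integral_prod_mul, integral_fun_fst (fun x => f x ^ 2), integral_fun_snd (fun y => g y ^ 2)]
  simp

end Product

section Affine

variable {Ω : Type*} [MeasurableSpace Ω] {μ : Measure Ω} [IsProbabilityMeasure μ]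

lemma integral_const_mul_add_const {X : Ω → ℝ} (hX : Integrable X μ) (a b : ℝ) :
    ∫ ω, (a * X ω + b) ∂μ = a * ∫ ω, X ω ∂μ + b := by
  rw [integral_add (hX.const_mul a) (integrable_const b), integral_const_mul]
  simp

lemma integral_const_mul_add_const_sq {X : Ω → ℝ} (hX : MemLp X 2 μ) (a b : ℝ) :
    ∫ ω, (a * X ω + b) ^ 2 ∂μ
      = a ^ 2 * ∫ ω, X ω ^ 2 ∂μ + 2 * a * b * ∫ ω, X ω ∂μ + b ^ 2 := by
  have h2 := hX.integrable_sq.const_mul (a ^ 2)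
  have h1 := (hX.integrable one_le_two).const_mul (2 * a * b)
  have : ∀ ω, (a * X ω + b) ^ 2 = a ^ 2 * X ω ^ 2 + 2 * a * b * X ω + b ^ 2 := fun ω => by ring
  simp_rw [this]
  rw [integral_add (h2.fun_add h1) (integrable_const _), integral_add h2 h1, integral_const_mul,
    integral_const_mul]
  simp

end Affine

section Poisson

lemma hasSum_descFactorial_mul_poisson (r : ℝ≥0) (k : ℕ) :
    HasSum (fun n : ℕ => exp (-r) * r ^ n / n ! * n.descFactorial k) (r ^ k) := by
  rw [← hasSum_nat_add_iff' k]
  have hzero : ∑ i ∈ Finset.range k, exp (-r) * r ^ i / i ! * (i.descFactorial k : ℝ) = 0 :=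
    Finset.sum_eq_zero fun i hi => by
      rw [Nat.descFactorial_eq_zero_iff_lt.mpr (Finset.mem_range.mp hi)]; simp
  rw [hzero, sub_zero]
  have hshift : ∀ n : ℕ, exp (-r) * r ^ (n + k) / (n + k)! * ((n + k).descFactorial k : ℝ)
      = (r : ℝ) ^ k * (exp (-r) * r ^ n / n !) := fun n => by
    have h := Nat.factorial_mul_descFactorial (Nat.le_add_left k n)
    rw [Nat.add_sub_cancel] at h
    rw [← h]
    push_cast
    field_simp
    ring
  simp_rw [hshift]
  simpa using (hasSum_one_poissonMeasure r).mul_left ((r : ℝ) ^ k)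

lemma integrable_descFactorial_poissonMeasure (r : ℝ≥0) (k : ℕ) :
    Integrable (fun n : ℕ => (n.descFactorial k : ℝ)) (poissonMeasure r) := by
  rw [integrable_poissonMeasure_iff]
  simpa using (hasSum_descFactorial_mul_poisson r k).summable

lemma integral_descFactorial_poissonMeasure (r : ℝ≥0) (k : ℕ) :
    ∫ n, (n.descFactorial k : ℝ) ∂(poissonMeasure r) = r ^ k := by
  rw [integral_poissonMeasure]
  exact (hasSum_descFactorial_mul_poisson r k).tsum_eq

lemma integral_natCast_poissonMeasure (r : ℝ≥0) :
    ∫ n, (n : ℝ) ∂(poissonMeasure r) = r := by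
  simpa using integral_descFactorial_poissonMeasure r 1

lemma natCast_sq_eq_descFactorial (n : ℕ) :
    (n : ℝ) ^ 2 = n.descFactorial 2 + n.descFactorial 1 := by
  rcases n with _ | n
  · simp
  · simp [Nat.descFactorial]; ring

lemma memLp_natCast_poissonMeasure (r : ℝ≥0) :
    MemLp (fun n : ℕ => (n : ℝ)) 2 (poissonMeasure r) := by
  refine (memLp_two_iff_integrable_sq (by fun_prop)).mpr ?_
  simp_rw [natCast_sq_eq_descFactorial]
  exact (integrable_descFactorial_poissonMeasure r 2).add
    (integrable_descFactorial_poissonMeasure r 1)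

lemma integral_natCast_sq_poissonMeasure (r : ℝ≥0) :
    ∫ n, (n : ℝ) ^ 2 ∂(poissonMeasure r) = r ^ 2 + r := by
  simp_rw [natCast_sq_eq_descFactorial]
  rw [integral_add (integrable_descFactorial_poissonMeasure r 2)
    (integrable_descFactorial_poissonMeasure r 1), integral_descFactorial_poissonMeasure,
    integral_descFactorial_poissonMeasure, pow_one]

end Poisson

section Gaussian

variable (m : ℝ) (v : ℝ≥0)

lemma integral_exp_gaussianReal : ∫ y, exp y ∂(gaussianReal m v) = exp (m + v / 2) := by
  simpa [mgf] using congrFun (mgf_fun_id_gaussianReal (μ := m) (v := v)) 1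

lemma integral_exp_sq_gaussianReal :
    ∫ y, exp y ^ 2 ∂(gaussianReal m v) = exp (2 * m + 2 * v) := by
  simp_rw [sq, ← exp_add, ← two_mul]
  rw [← mgf, mgf_fun_id_gaussianReal]
  ring_nf

lemma memLp_exp_gaussianReal : MemLp exp 2 (gaussianReal m v) := by
  refine (memLp_two_iff_integrable_sq (by fun_prop)).mpr ?_
  simp_rw [sq, ← exp_add, ← two_mul]
  exact integrable_exp_mul_gaussianReal 2

end Gaussian

theorem spingarch_one_step_second_moment_general (α σ2 : ℝ) (hσ2 : 0 < σ2)
    (η κ lam : ℝ) (hlam : 0 ≤ lam) :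
    ∫ p : ℝ × ℕ, (Real.exp p.1 + η * (p.2 : ℝ) + κ * lam) ^ 2
        ∂((gaussianReal α σ2.toNNReal).prod (poissonMeasure lam.toNNReal))
      = Real.exp (2 * α + 2 * σ2) + (η + κ) ^ 2 * lam ^ 2 + η ^ 2 * lam
        + 2 * (η + κ) * Real.exp (α + σ2 / 2) * lam := by
  have hN := memLp_natCast_poissonMeasure lam.toNNReal
  have hg : MemLp (fun n : ℕ => η * n + κ * lam) 2 (poissonMeasure lam.toNNReal) :=
    (hN.const_mul η).add (memLp_const _)
  simp only [add_assoc, integral_add_sq_prod (memLp_exp_gaussianReal α _) hg]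
  rw [integral_const_mul_add_const (hN.integrable one_le_two),
    integral_const_mul_add_const_sq hN, integral_exp_gaussianReal, integral_exp_sq_gaussianReal,
    integral_natCast_poissonMeasure, integral_natCast_sq_poissonMeasure,
    Real.coe_toNNReal _ hσ2.le, Real.coe_toNNReal _ hlam]
  ring

/-- One-step conditional second moment of the SPINGARCH(1,1) intensity: if `Y` is
Gaussian with mean `α` and variance `σ²`, independent of `Z` Poisson with rate `λ`, then
`E[(exp(Y) + η·Z + κ·λ)²] = exp(2α + 2σ²) + (η+κ)²λ² + η²λ + 2(η+κ)exp(α + σ²/2)λ`. -/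
theorem spingarch_one_step_second_moment (α σ2 : ℝ) (hσ2 : 0 < σ2)
    (η κ lam : ℝ) (hη : 0 ≤ η) (hκ : 0 ≤ κ) (hlam : 0 ≤ lam) :
    ∫ p : ℝ × ℕ, (Real.exp p.1 + η * (p.2 : ℝ) + κ * lam) ^ 2
        ∂((gaussianReal α σ2.toNNReal).prod (poissonMeasure lam.toNNReal))
      = Real.exp (2 * α + 2 * σ2) + (η + κ) ^ 2 * lam ^ 2 + η ^ 2 * lam
        + 2 * (η + κ) * Real.exp (α + σ2 / 2) * lam :=
  spingarch_one_step_second_moment_general α σ2 hσ2 η κ lam hlam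
end

section
/- Let α ∈ ℝ, σ² > 0 and η, κ ≥ 0 with η + κ < 1. Then there exist ψ ∈ (0,1), L > 0 and G > 0 such that for every λ ≥ 0, with P the product of the Gaussian measure on ℝ with mean α and variance σ² and the Poisson distribution on ℕ with rate λ, ∫ (1 + (exp(y) + η·n + κ·λ)²) dP(y, n) ≤ ψ·(1 + λ²) + L·𝟙{λ ≤ G}. -/
open MeasureTheory ProbabilityTheory Real
open scoped Nat NNReal

/-! Expanding the square and using the independence of `Y` and `Z` together with the Poisson
moments `E Z = λ`, `E Z² = λ² + λ`, the drift `E V(λ')` is the quadratic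
`1 + E e^{2Y} + (2(η + κ) E e^Y + η²) λ + (η + κ)² λ²`. Its leading coefficient `(η + κ)²` is
below one, so with `ψ = (1 + (η + κ)²) / 2` it lies below `ψ V(λ)` for large `λ`, and the
remaining bounded range `[0, G]` is absorbed by `L`. -/

section ProductSquare

variable {α β : Type*} [MeasurableSpace α] [MeasurableSpace β]
  {μ : Measure α} {ν : Measure β} [IsProbabilityMeasure μ] [IsProbabilityMeasure ν]

lemma integral_prod_add_sq {f : α → ℝ} {g : β → ℝ} (hf : MemLp f 2 μ) (hg : MemLp g 2 ν) :
    ∫ p, (f p.1 + g p.2) ^ 2 ∂μ.prod ν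
      = ∫ x, f x ^ 2 ∂μ + 2 * (∫ x, f x ∂μ) * (∫ y, g y ∂ν) + ∫ y, g y ^ 2 ∂ν := by
  have h₁ : Integrable (fun p : α × β ↦ f p.1 ^ 2) (μ.prod ν) := hf.integrable_sq.comp_fst ν
  have h₂ : Integrable (fun p : α × β ↦ 2 * f p.1 * g p.2) (μ.prod ν) :=
    ((hf.integrable one_le_two).const_mul 2).mul_prod (hg.integrable one_le_two)
  have h₃ : Integrable (fun p : α × β ↦ g p.2 ^ 2) (μ.prod ν) := hg.integrable_sq.comp_snd μ
  calc ∫ p, (f p.1 + g p.2) ^ 2 ∂μ.prod ν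
      = ∫ p, (f p.1 ^ 2 + 2 * f p.1 * g p.2 + g p.2 ^ 2) ∂μ.prod ν := by
        congr with p; ring
    _ = ∫ p, (f p.1 ^ 2 + 2 * f p.1 * g p.2) ∂μ.prod ν + ∫ p, g p.2 ^ 2 ∂μ.prod ν :=
        integral_add (h₁.add h₂) h₃
    _ = ∫ x, f x ^ 2 ∂μ + 2 * (∫ x, f x ∂μ) * (∫ y, g y ∂ν) + ∫ y, g y ^ 2 ∂ν := by
        rw [integral_add h₁ h₂, integral_fun_fst (fun x ↦ f x ^ 2),
          integral_fun_snd (fun y ↦ g y ^ 2), integral_prod_mul (fun x ↦ 2 * f x) g,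
          integral_const_mul]
        simp [mul_assoc]

end ProductSquare

lemma memLp_two_exp_gaussianReal (m : ℝ) (v : ℝ≥0) : MemLp rexp 2 (gaussianReal m v) := by
  refine (memLp_two_iff_integrable_sq continuous_exp.aestronglyMeasurable).2 ?_
  simpa [sq, ← Real.exp_add, two_mul] using integrable_exp_mul_gaussianReal (μ := m) (v := v) 2

section Poisson

variable (r : ℝ≥0)

lemma poisson_weight_succ_mul (n : ℕ) :
    rexp (-(r : ℝ)) * (r : ℝ) ^ (n + 1) / ((n + 1)! : ℝ) * (n + 1 : ℕ)
      = r * (rexp (-(r : ℝ)) * (r : ℝ) ^ n / (n ! : ℝ)) := by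
  rw [Nat.factorial_succ]
  push_cast
  field_simp
  ring

/-- The Stein–Chen identity `E[N f(N)] = r E[f(N + 1)]` for `N ~ Poisson(r)`, as a series. -/
lemma hasSum_poisson_natCast_mul {f : ℕ → ℝ} {s : ℝ}
    (h : HasSum (fun n ↦ rexp (-(r : ℝ)) * (r : ℝ) ^ n / (n ! : ℝ) * f (n + 1)) s) :
    HasSum (fun n ↦ rexp (-(r : ℝ)) * (r : ℝ) ^ n / (n ! : ℝ) * ((n : ℝ) * f n)) (r * s) := by
  refine (hasSum_nat_add_iff' 1).1 ?_
  simp only [Finset.range_one, Finset.sum_singleton, Nat.cast_zero, zero_mul, mul_zero, sub_zero]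
  refine (h.mul_left (r : ℝ)).congr_fun fun n ↦ ?_
  rw [← mul_assoc, ← mul_assoc, ← poisson_weight_succ_mul]

lemma hasSum_poisson_natCast :
    HasSum (fun n : ℕ ↦ rexp (-(r : ℝ)) * (r : ℝ) ^ n / (n ! : ℝ) * n) r := by
  simpa using hasSum_poisson_natCast_mul r (f := fun _ ↦ 1) (s := 1)
    (by simpa using hasSum_one_poissonMeasure r)

lemma hasSum_poisson_natCast_sq :
    HasSum (fun n : ℕ ↦ rexp (-(r : ℝ)) * (r : ℝ) ^ n / (n ! : ℝ) * (n : ℝ) ^ 2) (r ^ 2 + r) := by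
  have h := hasSum_poisson_natCast_mul r (f := fun n ↦ (n : ℝ))
    (by simpa [mul_add] using (hasSum_poisson_natCast r).add (hasSum_one_poissonMeasure r))
  convert h using 2 with n <;> ring

lemma integral_poissonMeasure_eq_of_hasSum {f : ℕ → ℝ} {s : ℝ}
    (h : HasSum (fun n ↦ rexp (-(r : ℝ)) * (r : ℝ) ^ n / (n ! : ℝ) * f n) s) :
    ∫ n, f n ∂poissonMeasure r = s := by
  simpa [integral_poissonMeasure] using h.tsum_eq

lemma memLp_two_natCast_poissonMeasure : MemLp (fun n : ℕ ↦ (n : ℝ)) 2 (poissonMeasure r) := by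
  refine (memLp_two_iff_integrable_sq .of_discrete).2 ?_
  refine integrable_poissonMeasure_iff.2 ?_
  simpa using (hasSum_poisson_natCast_sq r).summable

lemma integral_affine_poissonMeasure (a c : ℝ) :
    ∫ n, (a * n + c) ∂poissonMeasure r = a * r + c := by
  have h := ((hasSum_poisson_natCast r).mul_left a).add ((hasSum_one_poissonMeasure r).mul_left c)
  rw [integral_poissonMeasure_eq_of_hasSum r (h.congr_fun fun n ↦ by ring)]
  ring

lemma integral_affine_sq_poissonMeasure (a c : ℝ) :
    ∫ n, (a * n + c) ^ 2 ∂poissonMeasure r = (a * r + c) ^ 2 + a ^ 2 * r := by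
  have h := (((hasSum_poisson_natCast_sq r).mul_left (a ^ 2)).add
    ((hasSum_poisson_natCast r).mul_left (2 * a * c))).add
      ((hasSum_one_poissonMeasure r).mul_left (c ^ 2))
  rw [integral_poissonMeasure_eq_of_hasSum r (h.congr_fun fun n ↦ by ring)]
  ring

end Poisson

lemma exists_drift_bound_of_quadratic {a : ℝ} (ha₀ : 0 ≤ a) (ha₁ : a < 1) (b c : ℝ) :
    ∃ ψ ∈ Set.Ioo (0 : ℝ) 1, ∃ L > (0 : ℝ), ∃ G > (0 : ℝ), ∀ x : ℝ, 0 ≤ x →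
      c + b * x + a * x ^ 2 ≤ ψ * (1 + x ^ 2) + if x ≤ G then L else 0 := by
  set δ := (1 - a) / 2
  have hδ : 0 < δ := by simp only [δ]; linarith
  set G := max 1 ((|b| + |c|) / δ)
  have hG : |b| + |c| ≤ δ * G := by
    rw [← div_le_iff₀' hδ]; exact le_max_right _ _
  refine ⟨(1 + a) / 2, ⟨by linarith, by linarith⟩, 1 + |c| + |b| * G + a * G ^ 2, by positivity,
    G, lt_of_lt_of_le one_pos (le_max_left _ _), fun x hx ↦ ?_⟩
  have hψx : 0 ≤ (1 + a) / 2 * (1 + x ^ 2) := by positivity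
  have hbx : b * x ≤ |b| * x := mul_le_mul_of_nonneg_right (le_abs_self b) hx
  have hc : c ≤ |c| := le_abs_self c
  split_ifs with hxG
  · have : |b| * x ≤ |b| * G := mul_le_mul_of_nonneg_left hxG (abs_nonneg b)
    have : a * x ^ 2 ≤ a * G ^ 2 := mul_le_mul_of_nonneg_left (pow_le_pow_left₀ hx hxG 2) ha₀
    linarith
  · push Not at hxG
    have hx₁ : 1 ≤ x := (le_max_left _ _).trans hxG.le
    have : |c| ≤ |c| * x := le_mul_of_one_le_right (abs_nonneg c) hx₁
    have : (|b| + |c|) * x ≤ δ * x ^ 2 :=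
      calc (|b| + |c|) * x ≤ δ * G * x := mul_le_mul_of_nonneg_right hG hx
        _ ≤ δ * x * x := by gcongr
        _ = δ * x ^ 2 := by ring
    have : (1 + a) / 2 * (1 + x ^ 2) = (1 + a) / 2 + a * x ^ 2 + δ * x ^ 2 := by
      simp only [δ]; ring
    linarith

lemma integral_spingarch_lyapunov_eq (m : ℝ) (v : ℝ≥0) (η κ lam : ℝ) (hlam : 0 ≤ lam) :
    ∫ p : ℝ × ℕ, (1 + (rexp p.1 + η * (p.2 : ℝ) + κ * lam) ^ 2)
        ∂((gaussianReal m v).prod (poissonMeasure lam.toNNReal))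
      = (1 + ∫ y, rexp y ^ 2 ∂gaussianReal m v)
        + (2 * (η + κ) * ∫ y, rexp y ∂gaussianReal m v + η ^ 2) * lam + (η + κ) ^ 2 * lam ^ 2 := by
  set γ := gaussianReal m v
  set P := poissonMeasure lam.toNNReal
  have hexp : MemLp rexp 2 γ := memLp_two_exp_gaussianReal m v
  have hg : MemLp (fun n : ℕ ↦ η * n + κ * lam) 2 P :=
    ((memLp_two_natCast_poissonMeasure _).const_mul η).add (memLp_const _)
  have hsq : Integrable (fun p : ℝ × ℕ ↦ (rexp p.1 + (η * p.2 + κ * lam)) ^ 2) (γ.prod P) :=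
    ((hexp.comp_fst P).add (hg.comp_snd γ)).integrable_sq
  calc ∫ p : ℝ × ℕ, (1 + (rexp p.1 + η * (p.2 : ℝ) + κ * lam) ^ 2) ∂(γ.prod P)
      = 1 + ∫ p : ℝ × ℕ, (rexp p.1 + (η * p.2 + κ * lam)) ^ 2 ∂(γ.prod P) := by
        simp only [add_assoc]
        rw [integral_add (integrable_const 1) hsq]
        simp
    _ = _ := by
        rw [integral_prod_add_sq hexp hg, integral_affine_poissonMeasure,
          integral_affine_sq_poissonMeasure, Real.coe_toNNReal lam hlam]
        ring

theorem spingarch_drift_condition_general (α σ2 : ℝ)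
    (η κ : ℝ) (hη : 0 ≤ η) (hκ : 0 ≤ κ) (hηκ : η + κ < 1) :
    ∃ ψ ∈ Set.Ioo (0 : ℝ) 1, ∃ L > (0 : ℝ), ∃ G > (0 : ℝ), ∀ lam : ℝ, 0 ≤ lam →
      (∫ p : ℝ × ℕ, (1 + (Real.exp p.1 + η * (p.2 : ℝ) + κ * lam) ^ 2)
          ∂((gaussianReal α σ2.toNNReal).prod (poissonMeasure lam.toNNReal)))
        ≤ ψ * (1 + lam ^ 2) + (if lam ≤ G then L else 0) := by
  have ha₀ : 0 ≤ (η + κ) ^ 2 := sq_nonneg _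
  have ha₁ : (η + κ) ^ 2 < 1 := by nlinarith
  obtain ⟨ψ, hψ, L, hL, G, hG, hbound⟩ := exists_drift_bound_of_quadratic ha₀ ha₁
    (2 * (η + κ) * ∫ y, rexp y ∂gaussianReal α σ2.toNNReal + η ^ 2)
    (1 + ∫ y, rexp y ^ 2 ∂gaussianReal α σ2.toNNReal)
  refine ⟨ψ, hψ, L, hL, G, hG, fun lam hlam ↦ ?_⟩
  rw [integral_spingarch_lyapunov_eq α _ η κ lam hlam]
  exact hbound lam hlam

/-- Geometric drift condition for the SPINGARCH(1,1) chain with test function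
`V(λ) = 1 + λ²`: under `η, κ ≥ 0` and `η + κ < 1` there exist `ψ ∈ (0,1)`, `L > 0` and
`G > 0` such that for all `λ ≥ 0`,
`E[1 + (exp(Y) + η·Z + κ·λ)²] ≤ ψ·(1 + λ²) + L·𝟙{λ ≤ G}`. -/
theorem spingarch_drift_condition (α σ2 : ℝ) (hσ2 : 0 < σ2)
    (η κ : ℝ) (hη : 0 ≤ η) (hκ : 0 ≤ κ) (hηκ : η + κ < 1) :
    ∃ ψ ∈ Set.Ioo (0 : ℝ) 1, ∃ L > (0 : ℝ), ∃ G > (0 : ℝ), ∀ lam : ℝ, 0 ≤ lam →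
      (∫ p : ℝ × ℕ, (1 + (Real.exp p.1 + η * (p.2 : ℝ) + κ * lam) ^ 2)
          ∂((gaussianReal α σ2.toNNReal).prod (poissonMeasure lam.toNNReal)))
        ≤ ψ * (1 + lam ^ 2) + (if lam ≤ G then L else 0) :=
  spingarch_drift_condition_general α σ2 η κ hη hκ hηκ
end

section
/- Let (Ω, ℱ, μ) be a probability space, m ⊆ m' ⊆ ℱ sub-σ-algebras, and η, κ ≥ 0. Let λ be a nonnegative, m-measurable, square-integrable random variable; let Z be a square-integrable, m'-measurable random variable that is conditionally Poisson given m with intensity λ; let W be a nonnegative, square-integrable, m'-measurable random variable independent of the σ-algebra generated by m and Z; set λ' := W + η·Z + κ·λ; and let Z' be a square-integrable random variable that is conditionally Poisson given m' with intensity λ'. Then Var(Z') = Var(W) + (η + κ)²·Var(Z) − (κ² + 2κη)·E[Z] + E[Z']. -/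
/-!
Conditioning on `m'` gives `Var Z' = E[λ'] + Var λ'`, and `E[λ'] = E[Z']`. Since `W` is
independent of `ηZ + κλ`, `Var λ' = Var W + Var(ηZ + κλ)`. Finally `Z` is conditionally Poisson
given `m` with an `m`-measurable intensity, so `Cov(Z, λ) = Var λ = Var Z - E[Z]`, which turns
`Var(ηZ + κλ)` into `(η + κ)² Var Z - (κ² + 2κη) E[Z]`.
-/

open MeasureTheory ProbabilityTheory

namespace ProbabilityTheory

variable {Ω : Type*} {m mΩ : MeasurableSpace Ω} {μ : Measure[mΩ] Ω}

/-- `Z` is conditionally Poisson given `m` with intensity `lam`, in the sense of its first two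
conditional moments. -/
def IsCondPoisson (m : MeasurableSpace Ω) (μ : Measure[mΩ] Ω) (Z lam : Ω → ℝ) : Prop :=
  μ[Z | m] =ᵐ[μ] lam ∧ μ[fun ω => Z ω ^ 2 | m] =ᵐ[μ] fun ω => lam ω + lam ω ^ 2

lemma integral_eq_of_condExp_ae_eq [IsFiniteMeasure μ] {X Y : Ω → ℝ} (hm : m ≤ mΩ)
    (h : μ[X | m] =ᵐ[μ] Y) : ∫ ω, X ω ∂μ = ∫ ω, Y ω ∂μ := by
  rw [← integral_condExp hm, integral_congr_ae h]

variable {Z lam : Ω → ℝ}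

lemma indepFun_of_indep_sup_comap {W : Ω → ℝ}
    (h : Indep (MeasurableSpace.comap W Real.measurableSpace)
      (m ⊔ MeasurableSpace.comap Z Real.measurableSpace) μ)
    (hlam_meas : StronglyMeasurable[m] lam) (a b : ℝ) :
    IndepFun W (fun ω => a * Z ω + b * lam ω) μ := by
  have hZ : Measurable[m ⊔ MeasurableSpace.comap Z Real.measurableSpace] Z :=
    (comap_measurable Z).mono le_sup_right le_rfl
  have hlam : Measurable[m ⊔ MeasurableSpace.comap Z Real.measurableSpace] lam :=
    hlam_meas.measurable.mono le_sup_left le_rfl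
  rw [IndepFun_iff_Indep]
  exact indep_of_indep_of_le_right h
    (measurable_iff_comap_le.1 ((hZ.const_mul a).add (hlam.const_mul b)))

namespace IsCondPoisson

lemma integral_eq [IsFiniteMeasure μ] (hZ : IsCondPoisson m μ Z lam) (hm : m ≤ mΩ) :
    ∫ ω, Z ω ∂μ = ∫ ω, lam ω ∂μ :=
  integral_eq_of_condExp_ae_eq hm hZ.1

variable [IsProbabilityMeasure μ]

lemma variance_eq (hZ : IsCondPoisson m μ Z lam) (hm : m ≤ mΩ) (hZ_L2 : MemLp Z 2 μ)
    (hlam_L2 : MemLp lam 2 μ) :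
    Var[Z; μ] = ∫ ω, lam ω ∂μ + Var[lam; μ] := by
  have h_sq : ∫ ω, Z ω ^ 2 ∂μ = ∫ ω, lam ω ∂μ + ∫ ω, lam ω ^ 2 ∂μ := by
    rw [integral_eq_of_condExp_ae_eq hm hZ.2,
      integral_add (hlam_L2.integrable one_le_two) hlam_L2.integrable_sq]
  rw [variance_eq_sub hZ_L2, variance_eq_sub hlam_L2]
  simp only [Pi.pow_apply]
  rw [h_sq, hZ.integral_eq hm]
  ring

lemma covariance_eq_variance (hZ : IsCondPoisson m μ Z lam) (hm : m ≤ mΩ)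
    (hlam_meas : StronglyMeasurable[m] lam) (hZ_L2 : MemLp Z 2 μ) (hlam_L2 : MemLp lam 2 μ) :
    cov[Z, lam; μ] = Var[lam; μ] := by
  have h_pull : μ[lam * Z | m] =ᵐ[μ] lam * lam := by
    filter_upwards [condExp_mul_of_stronglyMeasurable_left hlam_meas
      (hlam_L2.integrable_mul hZ_L2) (hZ_L2.integrable one_le_two), hZ.1] with ω h_pull h_mean
    rw [h_pull, Pi.mul_apply, h_mean, Pi.mul_apply]
  rw [← covariance_self hlam_L2.aemeasurable, covariance_eq_sub hZ_L2 hlam_L2,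
    covariance_eq_sub hlam_L2 hlam_L2, mul_comm Z, hZ.integral_eq hm,
    integral_eq_of_condExp_ae_eq hm h_pull]

lemma variance_const_mul_add_const_mul (hZ : IsCondPoisson m μ Z lam) (hm : m ≤ mΩ)
    (hlam_meas : StronglyMeasurable[m] lam) (hZ_L2 : MemLp Z 2 μ) (hlam_L2 : MemLp lam 2 μ)
    (a b : ℝ) :
    Var[fun ω => a * Z ω + b * lam ω; μ]
      = (a + b) ^ 2 * Var[Z; μ] - (b ^ 2 + 2 * b * a) * ∫ ω, Z ω ∂μ := by
  have h_var_lam : Var[lam; μ] = Var[Z; μ] - ∫ ω, Z ω ∂μ := by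
    rw [hZ.variance_eq hm hZ_L2 hlam_L2, hZ.integral_eq hm]
    ring
  rw [variance_fun_add (hZ_L2.const_mul a) (hlam_L2.const_mul b), variance_const_mul,
    variance_const_mul, covariance_const_mul_left, covariance_const_mul_right,
    hZ.covariance_eq_variance hm hlam_meas hZ_L2 hlam_L2, h_var_lam]
  ring

end IsCondPoisson

end ProbabilityTheory

theorem spingarch_variance_recursion_general
    {Ω : Type*} [F : MeasurableSpace Ω] (μ : Measure Ω) [IsProbabilityMeasure μ]
    (m m' : MeasurableSpace Ω) (hmm' : m ≤ m') (hm' : m' ≤ F)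
    (η κ : ℝ)
    (lam Z W Z' : Ω → ℝ)
    (hlam_meas : StronglyMeasurable[m] lam)
    (hlam_L2 : MemLp lam 2 μ)
    (hZ_L2 : MemLp Z 2 μ)
    (hZ_mean : μ[Z | m] =ᵐ[μ] lam)
    (hZ_sq : μ[fun ω => Z ω ^ 2 | m] =ᵐ[μ] fun ω => lam ω + lam ω ^ 2)
    (hW_L2 : MemLp W 2 μ)
    (hW_indep : Indep (MeasurableSpace.comap W Real.measurableSpace)
      (m ⊔ MeasurableSpace.comap Z Real.measurableSpace) μ)
    (lam' : Ω → ℝ) (hlam'_def : lam' = fun ω => W ω + η * Z ω + κ * lam ω)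
    (hZ'_L2 : MemLp Z' 2 μ)
    (hZ'_mean : μ[Z' | m'] =ᵐ[μ] lam')
    (hZ'_sq : μ[fun ω => Z' ω ^ 2 | m'] =ᵐ[μ] fun ω => lam' ω + lam' ω ^ 2) :
    variance Z' μ = variance W μ + (η + κ) ^ 2 * variance Z μ
      - (κ ^ 2 + 2 * κ * η) * (∫ ω, Z ω ∂μ) + ∫ ω, Z' ω ∂μ := by
  have hZ : IsCondPoisson m μ Z lam := ⟨hZ_mean, hZ_sq⟩
  have hZ' : IsCondPoisson m' μ Z' lam' := ⟨hZ'_mean, hZ'_sq⟩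
  have hV_L2 : MemLp (fun ω => η * Z ω + κ * lam ω) 2 μ :=
    (hZ_L2.const_mul η).add (hlam_L2.const_mul κ)
  have h_lam'_eq : lam' = W + fun ω => η * Z ω + κ * lam ω := by
    rw [hlam'_def]
    ext ω
    simp only [Pi.add_apply, add_assoc]
  have h_var_lam' : Var[lam'; μ]
      = Var[W; μ] + (η + κ) ^ 2 * Var[Z; μ] - (κ ^ 2 + 2 * κ * η) * ∫ ω, Z ω ∂μ := by
    rw [h_lam'_eq, (indepFun_of_indep_sup_comap hW_indep hlam_meas η κ).variance_add hW_L2 hV_L2,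
      hZ.variance_const_mul_add_const_mul (hmm'.trans hm') hlam_meas hZ_L2 hlam_L2]
    ring
  have hlam'_L2 : MemLp lam' 2 μ := h_lam'_eq ▸ hW_L2.add hV_L2
  rw [hZ'.variance_eq hm' hZ'_L2 hlam'_L2, hZ'.integral_eq hm', h_var_lam']
  ring

/-- One-step variance recursion of the SPINGARCH(1,1) process: if `Z` is conditionally
Poisson given `m` with intensity `λ`, `W` is independent of `σ(m, Z)`, and `Z'` is
conditionally Poisson given `m'` with intensity `λ' = W + η·Z + κ·λ`, then
`Var(Z') = Var(W) + (η+κ)²·Var(Z) − (κ² + 2κη)·E[Z] + E[Z']`. -/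
theorem spingarch_variance_recursion
    {Ω : Type*} [F : MeasurableSpace Ω] (μ : Measure Ω) [IsProbabilityMeasure μ]
    (m m' : MeasurableSpace Ω) (hmm' : m ≤ m') (hm' : m' ≤ F)
    (η κ : ℝ) (hη : 0 ≤ η) (hκ : 0 ≤ κ)
    (lam Z W Z' : Ω → ℝ)
    (hlam_nonneg : ∀ ω, 0 ≤ lam ω)
    (hlam_meas : StronglyMeasurable[m] lam)
    (hlam_L2 : MemLp lam 2 μ)
    (hZ_L2 : MemLp Z 2 μ)
    (hZ_meas : StronglyMeasurable[m'] Z)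
    (hZ_mean : μ[Z | m] =ᵐ[μ] lam)
    (hZ_sq : μ[fun ω => Z ω ^ 2 | m] =ᵐ[μ] fun ω => lam ω + lam ω ^ 2)
    (hW_nonneg : ∀ ω, 0 ≤ W ω)
    (hW_L2 : MemLp W 2 μ)
    (hW_meas : StronglyMeasurable[m'] W)
    (hW_indep : Indep (MeasurableSpace.comap W Real.measurableSpace)
      (m ⊔ MeasurableSpace.comap Z Real.measurableSpace) μ)
    (lam' : Ω → ℝ) (hlam'_def : lam' = fun ω => W ω + η * Z ω + κ * lam ω)
    (hZ'_L2 : MemLp Z' 2 μ)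
    (hZ'_mean : μ[Z' | m'] =ᵐ[μ] lam')
    (hZ'_sq : μ[fun ω => Z' ω ^ 2 | m'] =ᵐ[μ] fun ω => lam' ω + lam' ω ^ 2) :
    variance Z' μ = variance W μ + (η + κ) ^ 2 * variance Z μ
      - (κ ^ 2 + 2 * κ * η) * (∫ ω, Z ω ∂μ) + ∫ ω, Z' ω ∂μ :=
  spingarch_variance_recursion_general (F := F) μ m m' hmm' hm' η κ lam Z W Z' hlam_meas hlam_L2
    hZ_L2 hZ_mean hZ_sq hW_L2 hW_indep lam' hlam'_def hZ'_L2 hZ'_mean hZ'_sq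
end

section
/- Let η, κ ∈ ℝ with η ≥ 0, κ ≥ 0, η + κ < 1, and suppose η² = 1 − (η + κ)². Then the quantity ρ := (η + κ) − κ/2 satisfies 1/2 < ρ ≤ √2/2. -/
/-- For an INGARCH(1,1) process with variance-to-mean ratio 2 (equivalently
`η² = 1 − (η+κ)²`), the lag-one autocorrelation `ρ = (η+κ) − κ/2` satisfies
`1/2 < ρ ≤ √2/2`. -/
theorem ingarch_autocorrelation_range
    (η κ : ℝ) (hη : 0 ≤ η) (hκ : 0 ≤ κ) (hηκ : η + κ < 1)
    (hratio : η ^ 2 = 1 - (η + κ) ^ 2) (ρ : ℝ) (hρ : ρ = (η + κ) - κ / 2) :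
    1 / 2 < ρ ∧ ρ ≤ Real.sqrt 2 / 2 := by
  set s := η + κ with hs
  have hs0 : 0 ≤ s := by positivity
  have hηpos : 0 < η := by nlinarith
  have hspos : 0 < s := by nlinarith
  have hρ' : ρ = (η + s) / 2 := by rw [hρ, hs]; ring
  constructor
  · rw [hρ']
    nlinarith [mul_pos hηpos hspos]
  · have h2 : (η + s) ^ 2 ≤ 2 := by nlinarith [sq_nonneg (η - s)]
    have hle : η + s ≤ Real.sqrt 2 := by
      have := Real.sqrt_le_sqrt h2
      rwa [Real.sqrt_sq (by positivity)] at this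
    rw [hρ']; linarith
end

section
/- Let ρ ∈ ℝ. If 0 < ρ < √2/2, then there exist α ∈ ℝ and σ² > 0 such that, setting w₁ = exp(α + σ²/2) and w₂ = exp(2α + σ²)·(exp(σ²) − 1), one has w₂/((1 + ρ)·w₁) + 1/(1 − ρ²) = 2. Conversely, if √2/2 ≤ ρ < 1, then no α ∈ ℝ and σ² > 0 satisfy this equation. -/
/-!
Since `exp (2α + σ²) = exp (α + σ²/2) ^ 2`, the quotient `w₂ / w₁` equals `w₁ (exp σ² - 1)`, and
for fixed `σ² > 0` the shift `α` makes it an arbitrary positive number. For `-1 < ρ < 1` the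
equation `w₂ / ((1 + ρ) w₁) + 1 / (1 - ρ²) = 2` reads `w₂ / w₁ = (1 - 2ρ²) / (1 - ρ)`, so it is
solvable exactly when `2ρ² < 1`, i.e. `ρ < √2 / 2` for `ρ ≥ 0`.
-/

open Real

lemma exp_two_mul_add_mul_div_exp (α σ2 : ℝ) :
    exp (2 * α + σ2) * (exp σ2 - 1) / exp (α + σ2 / 2) = exp (α + σ2 / 2) * (exp σ2 - 1) := by
  rw [show 2 * α + σ2 = (α + σ2 / 2) + (α + σ2 / 2) by ring, exp_add]
  field_simp

lemma exp_add_half_mul_exp_sub_one_pos {α σ2 : ℝ} (hσ : 0 < σ2) :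
    0 < exp (α + σ2 / 2) * (exp σ2 - 1) :=
  mul_pos (exp_pos _) (sub_pos.mpr (one_lt_exp_iff.mpr hσ))

lemma exists_exp_add_half_mul_exp_sub_one_eq {σ2 c : ℝ} (hσ : 0 < σ2) (hc : 0 < c) :
    ∃ α : ℝ, exp (α + σ2 / 2) * (exp σ2 - 1) = c := by
  have hσ' : 0 < exp σ2 - 1 := sub_pos.mpr (one_lt_exp_iff.mpr hσ)
  refine ⟨log (c / (exp σ2 - 1)) - σ2 / 2, ?_⟩
  rw [sub_add_cancel, exp_log (div_pos hc hσ'), div_mul_cancel₀ _ hσ'.ne']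

lemma div_one_add_add_one_div_one_sub_sq_eq_two_iff {x ρ : ℝ} (h₁ : 1 + ρ ≠ 0) (h₂ : 1 - ρ ≠ 0) :
    x / (1 + ρ) + 1 / (1 - ρ ^ 2) = 2 ↔ x = (1 - 2 * ρ ^ 2) / (1 - ρ) := by
  have h : 1 - ρ ^ 2 = (1 + ρ) * (1 - ρ) := by ring
  rw [h, eq_div_iff h₂]
  field_simp
  constructor <;> intro e <;> linarith

lemma two_mul_sq_lt_one_iff_lt_sqrt_two_div_two {ρ : ℝ} (hρ : 0 ≤ ρ) :
    2 * ρ ^ 2 < 1 ↔ ρ < √2 / 2 := by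
  have hsq : (√2 / 2) ^ 2 = 1 / 2 := by
    rw [div_pow, sq_sqrt zero_le_two]
    norm_num
  rw [← pow_lt_pow_iff_left₀ hρ (by positivity) two_ne_zero, hsq]
  constructor <;> intro e <;> linarith

lemma lognormal_dispersion_eq_two_iff {α σ2 ρ : ℝ} (h₁ : 1 + ρ ≠ 0) (h₂ : 1 - ρ ≠ 0) :
    exp (2 * α + σ2) * (exp σ2 - 1) / ((1 + ρ) * exp (α + σ2 / 2)) + 1 / (1 - ρ ^ 2) = 2 ↔
      exp (α + σ2 / 2) * (exp σ2 - 1) = (1 - 2 * ρ ^ 2) / (1 - ρ) := by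
  rw [mul_comm (1 + ρ), ← div_div, exp_two_mul_add_mul_div_exp,
    div_one_add_add_one_div_one_sub_sq_eq_two_iff h₁ h₂]

/-- A SPINGARCH(1,1) process with `κ = 0` and variance-to-mean ratio 2 can have any
lag-one autocorrelation `ρ` with `0 < ρ < √2/2`, and no such process exists when
`√2/2 ≤ ρ < 1`. Here `w₁ = E[exp(Y)] = exp(α + σ²/2)` and
`w₂ = Var(exp(Y)) = exp(2α + σ²)(exp(σ²) − 1)` for `Y` Gaussian`(α, σ²)`. -/
theorem spingarch_kappa_zero_ratio_two_autocorrelation (ρ : ℝ) :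
    (0 < ρ ∧ ρ < Real.sqrt 2 / 2 →
      ∃ α σ2 : ℝ, 0 < σ2 ∧
        (Real.exp (2 * α + σ2) * (Real.exp σ2 - 1))
            / ((1 + ρ) * Real.exp (α + σ2 / 2)) + 1 / (1 - ρ ^ 2) = 2) ∧
    (Real.sqrt 2 / 2 ≤ ρ ∧ ρ < 1 →
      ¬ ∃ α σ2 : ℝ, 0 < σ2 ∧
        (Real.exp (2 * α + σ2) * (Real.exp σ2 - 1))
            / ((1 + ρ) * Real.exp (α + σ2 / 2)) + 1 / (1 - ρ ^ 2) = 2) := by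
  constructor
  · rintro ⟨hρ₀, hρ⟩
    have hsq : 2 * ρ ^ 2 < 1 := (two_mul_sq_lt_one_iff_lt_sqrt_two_div_two hρ₀.le).mpr hρ
    have hρ₁ : ρ < 1 := by nlinarith
    obtain ⟨α, hα⟩ := exists_exp_add_half_mul_exp_sub_one_eq one_pos
      (div_pos (by linarith : 0 < 1 - 2 * ρ ^ 2) (by linarith : 0 < 1 - ρ))
    exact ⟨α, 1, one_pos, (lognormal_dispersion_eq_two_iff (by linarith) (by linarith)).mpr hα⟩
  · rintro ⟨hρ, hρ₁⟩ ⟨α, σ2, hσ, h⟩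
    have hρ₀ : 0 < ρ := lt_of_lt_of_le (by positivity) hρ
    have hsq : 1 ≤ 2 * ρ ^ 2 :=
      not_lt.mp ((two_mul_sq_lt_one_iff_lt_sqrt_two_div_two hρ₀.le).not.mpr hρ.not_gt)
    have hrhs : (1 - 2 * ρ ^ 2) / (1 - ρ) ≤ 0 :=
      div_nonpos_of_nonpos_of_nonneg (by linarith) (by linarith)
    have hlhs := (lognormal_dispersion_eq_two_iff (by linarith) (by linarith)).mp h
    linarith [exp_add_half_mul_exp_sub_one_pos (α := α) hσ]
end
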